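/- Suppose z* = (x*, y*) satisfies f(x*) − h(y*) ≤ 0, G(x*) ≤ 0 componentwise and y* ≥ 0 componentwise, that g_j(x*) < 0 for every j ∈ N and y*_j > 0 for every j ∈ B_a, that the radius of active-set stability δ_G is finite, and let δ_A be the unique fixed point of Δ. Then every z = (x, y) ∈ S*_L with ‖z − z*‖_P < δ_A satisfies g_j(x) ≤ 0 for every j ∈ {1, …, m}; consequently z satisfies f(x) − h(y) ≤ 0, G(x) ≤ 0 componentwise and y ≥ 0 componentwise, i.e. z is a primal-dual solution of the full problem. -/

import Mathlib

noncomputable section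

open scoped ENNReal
open Classical Filter Topology

/-- The primal-dual space ℝⁿ × ℝᵐ with the Euclidean norm. -/
abbrev Zsp (n m : ℕ) := EuclideanSpace ℝ (Fin n ⊕ Fin m)

/-- The primal (x-) part of a primal-dual point. -/
def xPart {n m : ℕ} (z : Zsp n m) : Fin n → ℝ := fun i => z (Sum.inl i)

/-- The dual (y-) part of a primal-dual point. -/
def yPart {n m : ℕ} (z : Zsp n m) : Fin m → ℝ := fun j => z (Sum.inr j)

/-- Convex subdifferential of `φ : ℝⁿ → ℝ` at `x`. -/
def subdiff {n : ℕ} (φ : (Fin n → ℝ) → ℝ) (x : Fin n → ℝ) : Set (Fin n → ℝ) :=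
  {u | ∀ w, φ x + ∑ i, u i * (w i - x i) ≤ φ w}

/-- Normal cone to the nonnegative orthant ℝᵐ₊ at `y`. -/
def normalConePos {m : ℕ} (y : Fin m → ℝ) : Set (Fin m → ℝ) :=
  {v | ∀ w : Fin m → ℝ, (∀ j, 0 ≤ w j) → ∑ j, v j * (w j - y j) ≤ 0}

/-- The saddle subdifferential F(z); empty unless the dual part is nonnegative. -/
def saddleF {n m : ℕ} (f : (Fin n → ℝ) → ℝ) (g : Fin m → (Fin n → ℝ) → ℝ)
    (z : Zsp n m) : Set (Zsp n m) :=
  {uv | (∀ j, 0 ≤ yPart z j) ∧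
    (∃ a ∈ subdiff f (xPart z), ∃ b : Fin m → Fin n → ℝ,
        (∀ j, b j ∈ subdiff (g j) (xPart z)) ∧
        ∀ i, xPart uv i = a i + ∑ j, yPart z j * b j i) ∧
    (∃ v ∈ normalConePos (yPart z), ∀ j, yPart uv j = -(g j (xPart z)) + v j)}

/-- The primal-dual solution set S* = {z : 0 ∈ F(z)}. -/
def Sstar {n m : ℕ} (f : (Fin n → ℝ) → ℝ) (g : Fin m → (Fin n → ℝ) → ℝ) :
    Set (Zsp n m) := {z | (0 : Zsp n m) ∈ saddleF f g z}

/-- A primal-dual point regarded as a plain vector indexed by `Fin n ⊕ Fin m`. -/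
def toVec {n m : ℕ} (z : Zsp n m) : (Fin n ⊕ Fin m) → ℝ := fun i => z i

/-- The P-seminorm ‖z‖_P = √(zᵀ P z). -/
def pnorm {n m : ℕ} (P : Matrix (Fin n ⊕ Fin m) (Fin n ⊕ Fin m) ℝ) (z : Zsp n m) : ℝ :=
  Real.sqrt (dotProduct (toVec z) (P.mulVec (toVec z)))

/-- P-distance from a point to a set. -/
def distP {n m : ℕ} (P : Matrix (Fin n ⊕ Fin m) (Fin n ⊕ Fin m) ℝ) (z : Zsp n m)
    (S : Set (Zsp n m)) : ℝ := sInf ((fun w => pnorm P (z - w)) '' S)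

/-- ℝ≥0∞-valued Q-seminorm distance from the origin to a set (equal to ⊤ on ∅). -/
def edistQ {n m : ℕ} (Q : Matrix (Fin n ⊕ Fin m) (Fin n ⊕ Fin m) ℝ)
    (A : Set (Zsp n m)) : ℝ≥0∞ := ⨅ w ∈ A, ENNReal.ofReal (pnorm Q w)

/-- Metric subregularity of the saddle subdifferential near the solution set. -/
def MetricSubregular {n m : ℕ} (f : (Fin n → ℝ) → ℝ)
    (g : Fin m → (Fin n → ℝ) → ℝ) : Prop :=
  ∀ t > (0:ℝ), ∃ α > (0:ℝ), ∀ z : Zsp n m, Metric.infDist z (Sstar f g) ≤ t →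
    ENNReal.ofReal (α * Metric.infDist z (Sstar f g)) ≤
      EMetric.infEdist (0 : Zsp n m) (saddleF f g z)

/-- `l` is the largest eigenvalue of `P`. -/
def IsMaxEigen {ι : Type*} [Fintype ι] (P : Matrix ι ι ℝ) (l : ℝ) : Prop :=
  (∃ v : ι → ℝ, v ≠ 0 ∧ P.mulVec v = l • v) ∧
  ∀ (μ : ℝ) (v : ι → ℝ), v ≠ 0 → P.mulVec v = μ • v → μ ≤ l

/-- The global metric subregularity modulus α_G over the τ-neighborhood of S*. -/
def alphaG {n m : ℕ} (f : (Fin n → ℝ) → ℝ) (g : Fin m → (Fin n → ℝ) → ℝ) (τ : ℝ) : ℝ :=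
  sInf {r : ℝ | ∃ z : Zsp n m, Metric.infDist z (Sstar f g) ≤ τ ∧
    0 < Metric.infDist z (Sstar f g) ∧ (saddleF f g z).Nonempty ∧
    r = Metric.infDist (0 : Zsp n m) (saddleF f g z) / Metric.infDist z (Sstar f g)}

/-- The optimal primal Lipschitz modulus L̄ˣ_j(t) on the P-ball of radius t around z*. -/
def Lxbar {n m : ℕ} (g : Fin m → (Fin n → ℝ) → ℝ)
    (P : Matrix (Fin n ⊕ Fin m) (Fin n ⊕ Fin m) ℝ) (zstar : Zsp n m)
    (j : Fin m) (t : ℝ) : ℝ :=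
  sSup {r : ℝ | ∃ w : Zsp n m, 0 < pnorm P (w - zstar) ∧ pnorm P (w - zstar) ≤ t ∧
    r = max (g j (xPart w) - g j (xPart zstar)) 0 / pnorm P (w - zstar)}

/-- The optimal dual Lipschitz modulus L̄ʸ_j(t) on the P-ball of radius t around z*. -/
def Lybar {n m : ℕ} (P : Matrix (Fin n ⊕ Fin m) (Fin n ⊕ Fin m) ℝ) (zstar : Zsp n m)
    (j : Fin m) (t : ℝ) : ℝ :=
  sSup {r : ℝ | ∃ w : Zsp n m, 0 < pnorm P (w - zstar) ∧ pnorm P (w - zstar) ≤ t ∧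
    r = max (yPart zstar j - yPart w j) 0 / pnorm P (w - zstar)}

/-- The set of radii of active-set stability around z*. -/
def stabSet {n m : ℕ} (g : Fin m → (Fin n → ℝ) → ℝ)
    (P : Matrix (Fin n ⊕ Fin m) (Fin n ⊕ Fin m) ℝ) (zstar : Zsp n m) : Set ℝ :=
  {t : ℝ | 0 < t ∧ ∀ w : Zsp n m, pnorm P (w - zstar) < t →
    (∀ j, g j (xPart zstar) < 0 → g j (xPart w) < 0) ∧
    (∀ j, g j (xPart zstar) = 0 → 0 < yPart zstar j → 0 < yPart w j)}

/-- The radius of active-set stability δ. -/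
def deltaG {n m : ℕ} (g : Fin m → (Fin n → ℝ) → ℝ)
    (P : Matrix (Fin n ⊕ Fin m) (Fin n ⊕ Fin m) ℝ) (zstar : Zsp n m) : ℝ :=
  sSup (stabSet g P zstar)

/-- The identifiable set M associated with the limit solution z*. -/
def Mset {n m : ℕ} (g : Fin m → (Fin n → ℝ) → ℝ) (zstar : Zsp n m) :
    Set (Zsp n m) :=
  {w | (∀ j, 0 ≤ yPart w j) ∧
    (∀ j, g j (xPart zstar) < 0 → g j (xPart w) < 0 ∧ yPart w j = 0) ∧
    (∀ j, g j (xPart zstar) = 0 → 0 < yPart zstar j → 0 < yPart w j)}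

/-- The dual function h(y) = inf_x (f(x) + ⟨y, G(x)⟩), with values in EReal. -/
def hdualFn {n m : ℕ} (f : (Fin n → ℝ) → ℝ) (g : Fin m → (Fin n → ℝ) → ℝ)
    (y : Fin m → ℝ) : EReal :=
  ⨅ x : Fin n → ℝ, ((f x + ∑ j, y j * g j x : ℝ) : EReal)

/-- The solution set S*_L of the reduced system (only constraints indexed by B). -/
def SstarL {n m : ℕ} (f : (Fin n → ℝ) → ℝ) (g : Fin m → (Fin n → ℝ) → ℝ)
    (zstar : Zsp n m) : Set (Zsp n m) :=
  {z | ((f (xPart z) : ℝ) : EReal) ≤ hdualFn f g (yPart z) ∧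
    (∀ j, g j (xPart zstar) = 0 → g j (xPart z) ≤ 0) ∧
    ∀ j, 0 ≤ yPart z j}

/-- The local metric subregularity modulus α_L. -/
def alphaL {n m : ℕ} (f : (Fin n → ℝ) → ℝ) (g : Fin m → (Fin n → ℝ) → ℝ)
    (zstar : Zsp n m) (τ : ℝ) : ℝ :=
  sInf {r : ℝ | ∃ z : Zsp n m, Metric.infDist z (Sstar f g) ≤ τ ∧
    0 < Metric.infDist z (SstarL f g zstar) ∧ (saddleF f g z).Nonempty ∧
    r = Metric.infDist (0 : Zsp n m) (saddleF f g z) /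
      Metric.infDist z (SstarL f g zstar)}

/-- The restricted metric subregularity modulus α_M over M ∩ B_P(z*, δ/2). -/
def alphaM {n m : ℕ} (f : (Fin n → ℝ) → ℝ) (g : Fin m → (Fin n → ℝ) → ℝ)
    (P : Matrix (Fin n ⊕ Fin m) (Fin n ⊕ Fin m) ℝ) (zstar : Zsp n m)
    (τ δ : ℝ) : ℝ :=
  sInf {r : ℝ | ∃ z : Zsp n m, Metric.infDist z (Sstar f g) ≤ τ ∧
    pnorm P (z - zstar) < δ / 2 ∧ z ∈ Mset g zstar ∧
    0 < Metric.infDist z (Sstar f g) ∧ (saddleF f g z).Nonempty ∧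
    r = Metric.infDist (0 : Zsp n m) (saddleF f g z) /
      Metric.infDist z (Sstar f g)}

/-- The function Δ, with values in ℝ≥0∞ (conventions: a/0 = ∞ for a > 0, inf ∅ = ∞). -/
def DeltaFn {n m : ℕ} (g : Fin m → (Fin n → ℝ) → ℝ)
    (P : Matrix (Fin n ⊕ Fin m) (Fin n ⊕ Fin m) ℝ) (zstar : Zsp n m)
    (t : ℝ) : ℝ≥0∞ :=
  min
    (⨅ j ∈ {j : Fin m | g j (xPart zstar) < 0},
      ENNReal.ofReal (-(g j (xPart zstar))) / ENNReal.ofReal (Lxbar g P zstar j t))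
    (⨅ j ∈ {j : Fin m | g j (xPart zstar) = 0 ∧ 0 < yPart zstar j},
      ENNReal.ofReal (yPart zstar j) / ENNReal.ofReal (Lybar P zstar j t))

/-!
For `j` with `g j x* = 0` the claim `g j x ≤ 0` is part of membership in `S*_L`. For `j` with
`g j x* < 0`, writing `L = L̄ˣ_j(δ_A)`,
`g j x - g j x* ≤ L ‖z - z*‖_P ≤ L δ_A ≤ -g j x*`, the last step being the fixed-point property
`Δ(δ_A) = δ_A`. The first step needs `L̄ˣ_j(δ_A)` to be a genuine supremum rather than the junk
value of `sSup` on an unbounded set: a convex function is Lipschitz on compact sets, and for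
positive definite `P` the norm `‖·‖_P` dominates a multiple of the Euclidean norm.
-/

section PNorm

variable {n m : ℕ} {P : Matrix (Fin n ⊕ Fin m) (Fin n ⊕ Fin m) ℝ}

lemma continuous_pnorm : Continuous (pnorm P) := by
  unfold pnorm toVec
  fun_prop

lemma pnorm_nonneg (v : Zsp n m) : 0 ≤ pnorm P v := Real.sqrt_nonneg _

@[simp]
lemma pnorm_zero : pnorm P (0 : Zsp n m) = 0 := by
  have h : toVec (0 : Zsp n m) = 0 := rfl
  simp [pnorm, h]

lemma pnorm_smul (b : ℝ) (v : Zsp n m) : pnorm P (b • v) = |b| * pnorm P v := by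
  have h : toVec (b • v) = b • toVec v := rfl
  rw [pnorm, h, Matrix.mulVec_smul, dotProduct_smul, smul_dotProduct, smul_eq_mul, smul_eq_mul,
    ← mul_assoc, Real.sqrt_mul (mul_self_nonneg b), Real.sqrt_mul_self_eq_abs, pnorm]

lemma Matrix.PosDef.pnorm_pos (hP : P.PosDef) {v : Zsp n m} (hv : v ≠ 0) : 0 < pnorm P v :=
  Real.sqrt_pos.2 <| by
    simpa using hP.dotProduct_mulVec_pos (x := toVec v) fun h => hv (PiLp.ext (congrFun h))

lemma Matrix.PosDef.pnorm_eq_zero_iff (hP : P.PosDef) {v : Zsp n m} : pnorm P v = 0 ↔ v = 0 :=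
  ⟨fun h => not_not.1 fun hv => (hP.pnorm_pos hv).ne' h, by rintro rfl; exact pnorm_zero⟩

lemma Matrix.PosDef.exists_pos_mul_norm_le_pnorm (hP : P.PosDef) :
    ∃ c > 0, ∀ v : Zsp n m, c * ‖v‖ ≤ pnorm P v := by
  obtain ⟨c, hc, hcle⟩ := (isCompact_sphere (0 : Zsp n m) 1).exists_forall_le'
    continuous_pnorm.continuousOn fun u hu => hP.pnorm_pos (ne_zero_of_mem_unit_sphere ⟨u, hu⟩)
  refine ⟨c, hc, fun v => ?_⟩
  rcases eq_or_ne v 0 with rfl | hv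
  · simp
  have hu : ‖v‖⁻¹ • v ∈ Metric.sphere (0 : Zsp n m) 1 := by simp [norm_smul, hv]
  calc c * ‖v‖ ≤ pnorm P (‖v‖⁻¹ • v) * ‖v‖ := by gcongr; exact hcle _ hu
    _ = pnorm P v := by
      rw [pnorm_smul, abs_inv, abs_norm, mul_comm, ← mul_assoc,
        mul_inv_cancel₀ (norm_ne_zero_iff.2 hv), one_mul]

end PNorm

section Slope

variable {n m : ℕ} {P : Matrix (Fin n ⊕ Fin m) (Fin n ⊕ Fin m) ℝ}

lemma xPart_sub (w z : Zsp n m) : xPart (w - z) = xPart w - xPart z := rfl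

lemma norm_xPart_le (v : Zsp n m) : ‖xPart v‖ ≤ ‖v‖ :=
  (pi_norm_le_iff_of_nonneg (norm_nonneg v)).2 fun i => PiLp.norm_apply_le v (Sum.inl i)

lemma ConvexOn.exists_sub_le_mul_pnorm {φ : (Fin n → ℝ) → ℝ} (hφ : ConvexOn ℝ Set.univ φ)
    (hP : P.PosDef) (zstar : Zsp n m) (t : ℝ) :
    ∃ K, ∀ w, pnorm P (w - zstar) ≤ t →
      φ (xPart w) - φ (xPart zstar) ≤ K * pnorm P (w - zstar) := by
  obtain ⟨c, hc, hcle⟩ := hP.exists_pos_mul_norm_le_pnorm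
  obtain ⟨K, hK⟩ := hφ.locallyLipschitz.locallyLipschitzOn.exists_lipschitzOnWith_of_compact
    (isCompact_closedBall (xPart zstar) (t / c))
  refine ⟨K / c, fun w hwt => ?_⟩
  have hxw : dist (xPart w) (xPart zstar) ≤ pnorm P (w - zstar) / c := by
    rw [dist_eq_norm, ← xPart_sub, le_div_iff₀ hc, mul_comm]
    exact (mul_le_mul_of_nonneg_left (norm_xPart_le _) hc.le).trans (hcle _)
  have hball : dist (xPart w) (xPart zstar) ≤ t / c := hxw.trans (by gcongr)
  calc φ (xPart w) - φ (xPart zstar) ≤ dist (φ (xPart w)) (φ (xPart zstar)) :=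
        (le_abs_self _).trans_eq (Real.dist_eq _ _).symm
    _ ≤ K * dist (xPart w) (xPart zstar) :=
        hK.dist_le_mul _ hball _ (Metric.mem_closedBall_self (dist_nonneg.trans hball))
    _ ≤ K * (pnorm P (w - zstar) / c) := by gcongr
    _ = K / c * pnorm P (w - zstar) := by ring

variable {g : Fin m → (Fin n → ℝ) → ℝ} {zstar : Zsp n m} {j : Fin m}

lemma bddAbove_Lxbar_set (hg : ConvexOn ℝ Set.univ (g j)) (hP : P.PosDef) (t : ℝ) :
    BddAbove {r : ℝ | ∃ w : Zsp n m, 0 < pnorm P (w - zstar) ∧ pnorm P (w - zstar) ≤ t ∧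
      r = max (g j (xPart w) - g j (xPart zstar)) 0 / pnorm P (w - zstar)} := by
  obtain ⟨K, hK⟩ := hg.exists_sub_le_mul_pnorm hP zstar t
  refine ⟨max K 0, ?_⟩
  rintro r ⟨w, hw0, hwt, rfl⟩
  rw [div_le_iff₀ hw0]
  exact max_le ((hK w hwt).trans (by gcongr; exact le_max_left _ _)) (by positivity)

lemma sub_le_Lxbar_mul_pnorm (hg : ConvexOn ℝ Set.univ (g j)) (hP : P.PosDef) {w : Zsp n m}
    {t : ℝ} (hwt : pnorm P (w - zstar) ≤ t) :
    g j (xPart w) - g j (xPart zstar) ≤ Lxbar g P zstar j t * pnorm P (w - zstar) := by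
  rcases (pnorm_nonneg (P := P) (w - zstar)).eq_or_lt' with hw0 | hw0
  · rw [hw0, mul_zero, sub_eq_zero.1 (hP.pnorm_eq_zero_iff.1 hw0), sub_self]
  · rw [← div_le_iff₀ hw0]
    exact (div_le_div_of_nonneg_right (le_max_left _ _) hw0.le).trans
      (le_csSup (bddAbove_Lxbar_set hg hP t) ⟨w, hw0, hwt, rfl⟩)

lemma Lxbar_mul_le_of_le_DeltaFn {s t : ℝ} (hs : 0 ≤ s) (hst : s ≤ t)
    (hΔ : ENNReal.ofReal t ≤ DeltaFn g P zstar t) (hj : g j (xPart zstar) < 0) :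
    Lxbar g P zstar j t * s ≤ -g j (xPart zstar) := by
  rcases le_or_gt (Lxbar g P zstar j t) 0 with hL | hL
  · nlinarith
  have hΔj : ENNReal.ofReal t ≤
      ENNReal.ofReal (-g j (xPart zstar)) / ENNReal.ofReal (Lxbar g P zstar j t) :=
    hΔ.trans ((min_le_left _ _).trans (iInf₂_le j hj))
  rw [ENNReal.le_div_iff_mul_le (.inl (ENNReal.ofReal_pos.2 hL).ne') (.inl ENNReal.ofReal_ne_top),
    ← ENNReal.ofReal_mul (hs.trans hst), ENNReal.ofReal_le_ofReal_iff (by linarith)] at hΔj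
  nlinarith

end Slope

theorem stmt17_general
    (n m : ℕ)
    (f : (Fin n → ℝ) → ℝ) (g : Fin m → (Fin n → ℝ) → ℝ)
    (hg : ∀ j, ConvexOn ℝ Set.univ (g j))
    (P : Matrix (Fin n ⊕ Fin m) (Fin n ⊕ Fin m) ℝ) (hP : P.PosDef)
    (zstar : Zsp n m)
    -- z* is a primal-dual solution of the full problem
    (hfeas : ∀ j : Fin m, g j (xPart zstar) ≤ 0)
    -- δ_A is the fixed point of Δ
    (δA : ℝ) (hfix : DeltaFn g P zstar δA = ENNReal.ofReal δA) :
    ∀ z : Zsp n m, z ∈ SstarL f g zstar → pnorm P (z - zstar) < δA →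
      (∀ j : Fin m, g j (xPart z) ≤ 0) ∧
      ((f (xPart z) : ℝ) : EReal) ≤ hdualFn f g (yPart z) ∧
      (∀ j : Fin m, 0 ≤ yPart z j) := by
  rintro z ⟨hgap, hB, hdfeas⟩ hz
  refine ⟨fun j => ?_, hgap, hdfeas⟩
  rcases (hfeas j).lt_or_eq with hN | hB0
  · have hslope := sub_le_Lxbar_mul_pnorm (hg j) hP hz.le
    have hfixj := Lxbar_mul_le_of_le_DeltaFn (pnorm_nonneg _) hz.le hfix.ge hN
    linarith
  · exact hB j hB0

/-- Lemma: points of S*_L near z* solve the full problem. -/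
theorem stmt17
    (n m : ℕ) (hn : 0 < n) (hm : 0 < m)
    (f : (Fin n → ℝ) → ℝ) (g : Fin m → (Fin n → ℝ) → ℝ)
    (hf : ConvexOn ℝ Set.univ f) (hg : ∀ j, ConvexOn ℝ Set.univ (g j))
    (P : Matrix (Fin n ⊕ Fin m) (Fin n ⊕ Fin m) ℝ) (hP : P.PosDef)
    (zstar : Zsp n m)
    -- z* is a primal-dual solution of the full problem
    (hgap : ((f (xPart zstar) : ℝ) : EReal) ≤ hdualFn f g (yPart zstar))
    (hfeas : ∀ j : Fin m, g j (xPart zstar) ≤ 0)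
    (hdfeas : ∀ j : Fin m, 0 ≤ yPart zstar j)
    -- δ_G is finite
    (hδfin : BddAbove (stabSet g P zstar))
    -- δ_A is the fixed point of Δ
    (δA : ℝ) (hδA : 0 < δA) (hfix : DeltaFn g P zstar δA = ENNReal.ofReal δA) :
    ∀ z : Zsp n m, z ∈ SstarL f g zstar → pnorm P (z - zstar) < δA →
      (∀ j : Fin m, g j (xPart z) ≤ 0) ∧
      ((f (xPart z) : ℝ) : EReal) ≤ hdualFn f g (yPart z) ∧
      (∀ j : Fin m, 0 ≤ yPart z j) :=
  stmt17_general n m f g hg P hP zstar hfeas δA hfix
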